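/- arXiv:2010.01602 — 3 statements merged into one kernel-verified Lean document; each statement's English description precedes it below -/
import Mathlib

section
/- In the setting where d(g_t x, g_t y) ≤ C₀ e^{−Bt} for all t ≥ 0 and τ is Lipschitz and positive, define α(z,t) by ∫₀^{α(z,t)} τ(g_r z) dr = t, and β^s(x,y) = ∫₀^∞ (τ(g_r x) − τ(g_r y)) dr. Then lim_{t→∞} (α(x,t) − α(y, t − β^s(x,y))) = 0. -/
open MeasureTheory Filter

/-- With `α(z,·)` the inverse of `t ↦ ∫₀ᵗ τ(g_r z) dr` and
`β^s(x,y) = ∫₀^∞ (τ(g_r x) − τ(g_r y)) dr`, exponential contraction of the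
forward orbits of `x` and `y` implies
`lim_{t→∞} (α(x,t) − α(y, t − β^s(x,y))) = 0`. -/
theorem stmt_4 {M : Type*} [MetricSpace M] [CompactSpace M]
    (g : ℝ → M → M)
    (hg : Continuous fun p : ℝ × M => g p.1 p.2)
    (τ : M → ℝ) (L : NNReal) (hτ : LipschitzWith L τ)
    (τmin τmax : ℝ) (hτmin : 0 < τmin)
    (hτbd : ∀ z, τmin ≤ τ z ∧ τ z ≤ τmax)
    (α : M → ℝ → ℝ)
    (hα : ∀ z t, (∫ r in (0:ℝ)..(α z t), τ (g r z)) = t)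
    (hα' : ∀ z t, α z (∫ r in (0:ℝ)..t, τ (g r z)) = t)
    (C₀ B : ℝ) (hC₀ : 0 < C₀) (hB : 0 < B)
    (x y : M)
    (hcontr : ∀ t ≥ (0:ℝ), dist (g t x) (g t y) ≤ C₀ * Real.exp (-B * t)) :
    Tendsto
      (fun t => α x t - α y (t - ∫ r in Set.Ioi (0:ℝ), (τ (g r x) - τ (g r y))))
      atTop (nhds 0) := by
  set β := ∫ r in Set.Ioi (0:ℝ), (τ (g r x) - τ (g r y)) with hβdef
  have hτmax : 0 < τmax := hτmin.trans_le ((hτbd x).1.trans (hτbd x).2)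
  -- continuity of flows
  have hgx : Continuous fun r : ℝ => g r x :=
    hg.comp (continuous_id.prodMk continuous_const)
  have hgy : Continuous fun r : ℝ => g r y :=
    hg.comp (continuous_id.prodMk continuous_const)
  have hcτx : Continuous fun r : ℝ => τ (g r x) := hτ.continuous.comp hgx
  have hcτy : Continuous fun r : ℝ => τ (g r y) := hτ.continuous.comp hgy
  have hix : ∀ u v : ℝ, IntervalIntegrable (fun r => τ (g r x)) volume u v :=
    fun u v => (hcτx.intervalIntegrable u v)
  have hiy : ∀ u v : ℝ, IntervalIntegrable (fun r => τ (g r y)) volume u v :=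
    fun u v => (hcτy.intervalIntegrable u v)
  -- integrability of the difference on Ioi 0
  have hInt : IntegrableOn (fun r => τ (g r x) - τ (g r y)) (Set.Ioi (0:ℝ)) := by
    have hmaj : IntegrableOn (fun r : ℝ => (L : ℝ) * C₀ * Real.exp (-B * r))
        (Set.Ioi (0:ℝ)) := (exp_neg_integrableOn_Ioi 0 hB).const_mul _
    refine hmaj.mono' ((hcτx.sub hcτy).aestronglyMeasurable.restrict) ?_
    filter_upwards [ae_restrict_mem measurableSet_Ioi] with r hr
    have h1 : dist (τ (g r x)) (τ (g r y)) ≤ (L : ℝ) * dist (g r x) (g r y) :=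
      hτ.dist_le_mul _ _
    have h2 : dist (g r x) (g r y) ≤ C₀ * Real.exp (-B * r) :=
      hcontr r (le_of_lt hr)
    calc ‖τ (g r x) - τ (g r y)‖ = dist (τ (g r x)) (τ (g r y)) := by
          rw [Real.dist_eq, Real.norm_eq_abs]
      _ ≤ (L : ℝ) * (C₀ * Real.exp (-B * r)) :=
          h1.trans (by exact mul_le_mul_of_nonneg_left h2 (NNReal.coe_nonneg L))
      _ = (L : ℝ) * C₀ * Real.exp (-B * r) := by ring
  have hlim : Tendsto (fun b => ∫ r in (0:ℝ)..b, (τ (g r x) - τ (g r y)))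
      atTop (nhds β) :=
    intervalIntegral_tendsto_integral_Ioi 0 hInt tendsto_id
  -- α z s ≥ s / τmax for s ≥ 0, in particular α z s → ∞
  have hαlb : ∀ (z : M) (s : ℝ), 0 ≤ s → s / τmax ≤ α z s := by
    intro z s hs
    have hiz : ∀ u v : ℝ, IntervalIntegrable (fun r => τ (g r z)) volume u v :=
      fun u v => ((hτ.continuous.comp
        (hg.comp (continuous_id.prodMk continuous_const))).intervalIntegrable u v)
    have ha0 : 0 ≤ α z s := by
      by_contra h
      push_neg at h
      have h1 : (0:ℝ) - α z s ≤ 0 - α z s := le_refl _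
      have h2 : (0 - α z s) * τmin ≤ ∫ r in α z s..(0:ℝ), τ (g r z) := by
        have := intervalIntegral.integral_mono_on h.le
          (intervalIntegrable_const (c := τmin)) (hiz _ _)
          (fun r _ => (hτbd (g r z)).1)
        simpa [intervalIntegral.integral_const, smul_eq_mul, mul_comm] using this
      have h3 : (∫ r in (0:ℝ)..(α z s), τ (g r z)) =
          -(∫ r in α z s..(0:ℝ), τ (g r z)) :=
        (intervalIntegral.integral_symm _ _)
      have h4 : 0 < (0 - α z s) * τmin :=
        mul_pos (by linarith) hτmin
      have : s < 0 := by
        rw [← hα z s, h3]; linarith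
      linarith
    have h5 : (∫ r in (0:ℝ)..(α z s), τ (g r z)) ≤ (α z s - 0) * τmax := by
      have := intervalIntegral.integral_mono_on ha0 (hiz _ _)
        (intervalIntegrable_const (c := τmax))
        (fun r _ => (hτbd (g r z)).2)
      simpa [intervalIntegral.integral_const, smul_eq_mul, mul_comm] using this
    rw [hα z s] at h5
    rw [div_le_iff₀ hτmax]
    linarith
  -- b t := α y (t - β) tends to ∞
  have hbtop : Tendsto (fun t => α y (t - β)) atTop atTop := by
    apply tendsto_atTop_mono' atTop
      (show ∀ᶠ t in atTop, (t - β) / τmax ≤ α y (t - β) by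
        filter_upwards [eventually_ge_atTop β] with t ht
        exact hαlb y (t - β) (by linarith))
    exact (tendsto_atTop_add_const_right atTop (-β) tendsto_id).atTop_div_const hτmax
  -- F t := β - ∫₀^{b t} diff tends to 0
  have hF : Tendsto (fun t => β - ∫ r in (0:ℝ)..(α y (t - β)),
      (τ (g r x) - τ (g r y))) atTop (nhds 0) := by
    have h1 := hlim.comp hbtop
    have h := (tendsto_const_nhds (x := β) (f := atTop)).sub h1
    simpa using h
  -- key identity and squeeze
  have hbd : ∀ᶠ t in atTop, ‖α x t - α y (t - β)‖ ≤
      |β - ∫ r in (0:ℝ)..(α y (t - β)), (τ (g r x) - τ (g r y))| / τmin := by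
    filter_upwards [eventually_ge_atTop (0:ℝ)] with t ht
    set a := α x t with ha
    set b := α y (t - β) with hb
    have hsub : (∫ r in (0:ℝ)..b, (τ (g r x) - τ (g r y))) =
        (∫ r in (0:ℝ)..b, τ (g r x)) - (∫ r in (0:ℝ)..b, τ (g r y)) :=
      intervalIntegral.integral_sub (hix _ _) (hiy _ _)
    have hxa : (∫ r in (0:ℝ)..a, τ (g r x)) = t := hα x t
    have hyb : (∫ r in (0:ℝ)..b, τ (g r y)) = t - β := hα y (t - β)
    have hkey : (∫ r in b..a, τ (g r x)) =
        β - ∫ r in (0:ℝ)..b, (τ (g r x) - τ (g r y)) := by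
      have hadd : (∫ r in (0:ℝ)..b, τ (g r x)) + (∫ r in b..a, τ (g r x)) =
          ∫ r in (0:ℝ)..a, τ (g r x) :=
        intervalIntegral.integral_add_adjacent_intervals (hix _ _) (hix _ _)
      rw [hsub, hyb]
      linarith [hadd, hxa]
    have hmono : τmin * |a - b| ≤ |∫ r in b..a, τ (g r x)| := by
      rcases le_total b a with hba | hab
      · have h2 : (a - b) * τmin ≤ ∫ r in b..a, τ (g r x) := by
          have := intervalIntegral.integral_mono_on hba
            (intervalIntegrable_const (c := τmin)) (hix _ _)
            (fun r _ => (hτbd (g r x)).1)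
          simpa [intervalIntegral.integral_const, smul_eq_mul, mul_comm] using this
        have h3 : 0 ≤ ∫ r in b..a, τ (g r x) :=
          le_trans (mul_nonneg (by linarith) hτmin.le) h2
        rw [abs_of_nonneg h3, abs_of_nonneg (by linarith : (0:ℝ) ≤ a - b)]
        linarith
      · have h2 : (b - a) * τmin ≤ ∫ r in a..b, τ (g r x) := by
          have := intervalIntegral.integral_mono_on hab
            (intervalIntegrable_const (c := τmin)) (hix _ _)
            (fun r _ => (hτbd (g r x)).1)
          simpa [intervalIntegral.integral_const, smul_eq_mul, mul_comm] using this
        have h3 : 0 ≤ ∫ r in a..b, τ (g r x) :=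
          le_trans (mul_nonneg (by linarith) hτmin.le) h2
        rw [intervalIntegral.integral_symm, abs_neg, abs_of_nonneg h3,
          abs_of_nonpos (by linarith : a - b ≤ 0)]
        linarith
    rw [hkey] at hmono
    rw [Real.norm_eq_abs, le_div_iff₀ hτmin]
    linarith [hmono]
  have hF' : Tendsto (fun t => |β - ∫ r in (0:ℝ)..(α y (t - β)),
      (τ (g r x) - τ (g r y))| / τmin) atTop (nhds 0) := by
    have := (hF.abs).div_const τmin
    simpa using this
  exact squeeze_zero_norm' hbd hF'
end

section
/- Let g_t be a flow on a compact metric space M such that d(g_t x, g_t y) ≤ C₀ e^{−Bt} d(x,y) for y in the stable set of x, and let τ be Lipschitz and positive, bounded below by τ_min > 0 and above by τ_max. Then there exist constants c, C > 0 such that for all t > 0, |α(x,t) − α(y, t − β^s(x,y))| ≤ C e^{−ct}, where α is the inverse time-change cocycle and β^s is as above. -/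
/-!
Put `f r = τ (g r x)`, `h r = τ (g r y)`, `a = α x t` and `b = α y (t - β)`, where
`β = β^s(x, y)`. Subtracting the equations defining `a` and `b` gives
`∫_b^a f = ∫_b^∞ (f - h)`. The left side is at least `τmin |a - b|`; by the Lipschitz bound
and the contraction the right side is `O(e^{-B b})`. As `h ≤ τmax`, `b ≥ (t - β) / τmax`
grows linearly in `t`, which yields the rate `B / τmax`; for bounded `t` both `a` and `b`
are bounded.
-/

open MeasureTheory Real Set intervalIntegral

lemma integral_Ioi_exp_neg_mul {B : ℝ} (hB : 0 < B) (u : ℝ) :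
    ∫ r in Ioi u, exp (-B * r) = exp (-B * u) / B := by
  rw [integral_exp_mul_Ioi (neg_lt_zero.mpr hB), neg_div_neg_eq]

section ExpDecay

variable {φ : ℝ → ℝ} {A B u : ℝ}

lemma integrableOn_Ioi_of_abs_le_mul_exp (hφ : Continuous φ) (hB : 0 < B)
    (hdecay : ∀ r > u, |φ r| ≤ A * exp (-B * r)) : IntegrableOn φ (Ioi u) :=
  ((exp_neg_integrableOn_Ioi u hB).const_mul A).mono' hφ.aestronglyMeasurable.restrict <|
    (ae_restrict_mem measurableSet_Ioi).mono fun r hr => hdecay r hr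

lemma abs_integral_Ioi_le_of_abs_le_mul_exp (hB : 0 < B)
    (hdecay : ∀ r > u, |φ r| ≤ A * exp (-B * r)) :
    |∫ r in Ioi u, φ r| ≤ A / B * exp (-B * u) := by
  calc |∫ r in Ioi u, φ r| ≤ ∫ r in Ioi u, A * exp (-B * r) := by
        rw [← Real.norm_eq_abs]
        exact norm_integral_le_of_norm_le ((exp_neg_integrableOn_Ioi u hB).const_mul A) <|
          (ae_restrict_mem measurableSet_Ioi).mono fun r hr => hdecay r hr
    _ = A / B * exp (-B * u) := by
        rw [MeasureTheory.integral_const_mul, integral_Ioi_exp_neg_mul hB]; ring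

end ExpDecay

section TimeChange

variable {f h : ℝ → ℝ} {m M : ℝ}

lemma mul_abs_sub_le_abs_intervalIntegral (hf : Continuous f)
    (hfm : ∀ r, m ≤ f r) (u v : ℝ) : m * |u - v| ≤ |∫ r in v..u, f r| := by
  wlog huv : v ≤ u generalizing u v
  · rw [abs_sub_comm, integral_symm, abs_neg]
    exact this v u (le_of_not_ge huv)
  have hmono : m * (u - v) ≤ ∫ r in v..u, f r := by
    simpa [mul_comm] using
      integral_mono_on huv (intervalIntegrable_const (μ := volume)) (hf.intervalIntegrable v u)
        fun r _ => hfm r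
  rw [abs_of_nonneg (sub_nonneg.mpr huv)]
  exact hmono.trans (le_abs_self _)

lemma div_le_of_intervalIntegral_nonneg (hh : Continuous h) (hm : 0 < m)
    (hhm : ∀ r, m ≤ h r) (hhM : ∀ r, h r ≤ M) {b : ℝ}
    (hs : 0 ≤ ∫ r in (0:ℝ)..b, h r) :
    (∫ r in (0:ℝ)..b, h r) / M ≤ b := by
  have hM : 0 < M := hm.trans_le ((hhm 0).trans (hhM 0))
  have hb : 0 ≤ b := by
    by_contra! hb
    have hpos : 0 < ∫ r in b..0, h r :=
      intervalIntegral_pos_of_pos_on (hh.intervalIntegrable b 0)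
        (fun r _ => hm.trans_le (hhm r)) hb
    rw [integral_symm] at hs
    linarith
  rw [div_le_iff₀ hM]
  simpa using integral_mono_on hb (hh.intervalIntegrable 0 b)
    (intervalIntegrable_const (μ := volume)) fun r _ => hhM r

lemma integral_interval_eq_integral_Ioi_sub (hf : Continuous f) (hh : Continuous h) {a b t : ℝ}
    (hint : IntegrableOn (fun r => f r - h r) (Ioi b)) (ha : ∫ r in (0:ℝ)..a, f r = t)
    (hb : ∫ r in (0:ℝ)..b, h r = t - ∫ r in Ioi 0, (f r - h r)) :
    ∫ r in b..a, f r = ∫ r in Ioi b, (f r - h r) := by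
  have hsplit := integral_interval_add_Ioi' (f := fun r => f r - h r)
    ((hf.sub hh).intervalIntegrable 0 b) hint
  rw [integral_sub (hf.intervalIntegrable 0 b) (hh.intervalIntegrable 0 b), hb] at hsplit
  rw [← integral_interval_sub_left (hf.intervalIntegrable 0 a) (hf.intervalIntegrable 0 b), ha]
  linarith

variable {A B : ℝ} {a b : ℝ → ℝ}

lemma mul_abs_sub_le_of_time_change (hf : Continuous f) (hh : Continuous h) (hm : 0 < m)
    (hfm : ∀ r, m ≤ f r) (hhm : ∀ r, m ≤ h r) (hhM : ∀ r, h r ≤ M) (hB : 0 < B)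
    (hdecay : ∀ r ≥ 0, |f r - h r| ≤ A * exp (-B * r))
    (ha : ∀ t, ∫ r in (0:ℝ)..a t, f r = t) (hb : ∀ s, ∫ r in (0:ℝ)..b s, h r = s)
    {t : ℝ} (ht : 0 < t) :
    m * |a t - b (t - ∫ r in Ioi 0, (f r - h r))|
      ≤ 3 * (A / B) * exp (-(B / M) * (t - A / B)) := by
  set β := ∫ r in Ioi 0, (f r - h r)
  set s := t - β
  set K := A / B
  have hM : 0 < M := hm.trans_le ((hhm 0).trans (hhM 0))
  have hK : 0 ≤ K := div_nonneg (by simpa using (abs_nonneg _).trans (hdecay 0 le_rfl)) hB.le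
  have hdecay_Ioi : ∀ u ≥ 0, ∀ r > u, |f r - h r| ≤ A * exp (-B * r) :=
    fun u hu r hr => hdecay r (hu.trans hr.le)
  have hβ : |β| ≤ K := by
    simpa using abs_integral_Ioi_le_of_abs_le_mul_exp hB (hdecay_Ioi 0 le_rfl)
  have hβ' := abs_le.mp hβ
  rcases le_or_gt K t with hKt | htK
  · have hs : 0 ≤ ∫ r in (0:ℝ)..b s, h r := by rw [hb s]; linarith
    have hbs : s / M ≤ b s := by
      simpa [hb s] using div_le_of_intervalIntegral_nonneg hh hm hhm hhM hs
    have hb0 : 0 ≤ b s := (div_nonneg (by simpa [hb s] using hs) hM.le).trans hbs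
    calc m * |a t - b s|
      _ ≤ |∫ r in b s..a t, f r| := mul_abs_sub_le_abs_intervalIntegral hf hfm _ _
      _ = |∫ r in Ioi (b s), (f r - h r)| := by
          rw [integral_interval_eq_integral_Ioi_sub hf hh ?_ (ha t) (hb s)]
          exact integrableOn_Ioi_of_abs_le_mul_exp (hf.sub hh) hB (hdecay_Ioi _ hb0)
      _ ≤ K * exp (-B * b s) := abs_integral_Ioi_le_of_abs_le_mul_exp hB (hdecay_Ioi _ hb0)
      _ ≤ K * exp (-(B / M) * (t - K)) := by
          gcongr K * exp ?_
          have hbK : (t - K) / M ≤ b s :=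
            (div_le_div_of_nonneg_right (by linarith) hM.le).trans hbs
          have : B / M * (t - K) ≤ B * b s := by
            rw [div_mul_eq_mul_div, mul_div_assoc]; gcongr
          linarith
      _ ≤ 3 * K * exp (-(B / M) * (t - K)) := by gcongr; linarith
  · have hat : m * |a t| ≤ t := by
      simpa [ha t, abs_of_pos ht] using mul_abs_sub_le_abs_intervalIntegral hf hfm (a t) 0
    have hbs : m * |b s| ≤ |s| := by
      simpa [hb s] using mul_abs_sub_le_abs_intervalIntegral hh hhm (b s) 0
    have hs : |s| ≤ 2 * K := abs_le.mpr ⟨by linarith, by linarith⟩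
    calc m * |a t - b s| ≤ m * |a t| + m * |b s| := by
          rw [← mul_add]; exact mul_le_mul_of_nonneg_left (abs_sub _ _) hm.le
      _ ≤ 3 * K := by linarith
      _ ≤ 3 * K * exp (-(B / M) * (t - K)) :=
          le_mul_of_one_le_right (by positivity) (one_le_exp (by nlinarith [div_pos hB hM]))

lemma exists_abs_sub_le_exp_of_time_change (hf : Continuous f) (hh : Continuous h) (hm : 0 < m)
    (hfm : ∀ r, m ≤ f r) (hhm : ∀ r, m ≤ h r) (hhM : ∀ r, h r ≤ M) (hB : 0 < B)
    (hdecay : ∀ r ≥ 0, |f r - h r| ≤ A * exp (-B * r))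
    (ha : ∀ t, ∫ r in (0:ℝ)..a t, f r = t) (hb : ∀ s, ∫ r in (0:ℝ)..b s, h r = s) :
    ∃ c > 0, ∃ C > 0, ∀ t > 0,
      |a t - b (t - ∫ r in Ioi 0, (f r - h r))| ≤ C * exp (-c * t) := by
  have hM : 0 < M := hm.trans_le ((hhm 0).trans (hhM 0))
  have hK : 0 ≤ A / B :=
    div_nonneg (by simpa using (abs_nonneg _).trans (hdecay 0 le_rfl)) hB.le
  set c := B / M
  set D := 3 * (A / B) / m * exp (c * (A / B))
  refine ⟨c, div_pos hB hM, D + 1, by positivity, fun t ht => ?_⟩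
  have hbound := mul_abs_sub_le_of_time_change hf hh hm hfm hhm hhM hB hdecay ha hb ht
  calc |a t - b (t - ∫ r in Ioi 0, (f r - h r))|
    _ ≤ 3 * (A / B) / m * exp (-c * (t - A / B)) := by
        rw [div_mul_eq_mul_div, le_div_iff₀ hm]; linarith
    _ = D * exp (-c * t) := by rw [mul_assoc, ← exp_add]; ring_nf
    _ ≤ (D + 1) * exp (-c * t) := by gcongr; linarith

end TimeChange

theorem stmt_5_general {M : Type*} [MetricSpace M]
    (g : ℝ → M → M)
    (hg : Continuous fun p : ℝ × M => g p.1 p.2)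
    (τ : M → ℝ) (L : NNReal) (hτ : LipschitzWith L τ)
    (τmin τmax : ℝ) (hτmin : 0 < τmin)
    (hτbd : ∀ z, τmin ≤ τ z ∧ τ z ≤ τmax)
    (α : M → ℝ → ℝ)
    (hα : ∀ z t, (∫ r in (0:ℝ)..(α z t), τ (g r z)) = t)
    (C₀ B : ℝ) (hB : 0 < B)
    (x y : M)
    (hcontr : ∀ t ≥ (0:ℝ), dist (g t x) (g t y) ≤ C₀ * Real.exp (-B * t) * dist x y) :
    ∃ c > (0:ℝ), ∃ C > (0:ℝ), ∀ t > (0:ℝ),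
      |α x t - α y (t - ∫ r in Set.Ioi (0:ℝ), (τ (g r x) - τ (g r y)))|
        ≤ C * Real.exp (-c * t) := by
  have hcont (z : M) : Continuous fun r => τ (g r z) :=
    hτ.continuous.comp (hg.comp (continuous_id.prodMk continuous_const))
  have hdecay : ∀ r ≥ 0, |τ (g r x) - τ (g r y)| ≤ L * C₀ * dist x y * exp (-B * r) :=
    fun r hr => calc
      |τ (g r x) - τ (g r y)| ≤ L * dist (g r x) (g r y) := hτ.dist_le_mul _ _
      _ ≤ L * (C₀ * exp (-B * r) * dist x y) := by gcongr; exact hcontr r hr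
      _ = L * C₀ * dist x y * exp (-B * r) := by ring
  exact exists_abs_sub_le_exp_of_time_change (hcont x) (hcont y) hτmin (fun _ => (hτbd _).1)
    (fun _ => (hτbd _).1) (fun _ => (hτbd _).2) hB hdecay (hα x) (hα y)

/-- Quantitative version: under exponential contraction
`d(g_t x, g_t y) ≤ C₀ e^{−Bt} d(x,y)` and `0 < τ_min ≤ τ ≤ τ_max` Lipschitz,
there are constants `c, C > 0` with
`|α(x,t) − α(y, t − β^s(x,y))| ≤ C e^{−ct}` for all `t > 0`. -/
theorem stmt_5 {M : Type*} [MetricSpace M] [CompactSpace M]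
    (g : ℝ → M → M)
    (hg : Continuous fun p : ℝ × M => g p.1 p.2)
    (τ : M → ℝ) (L : NNReal) (hτ : LipschitzWith L τ)
    (τmin τmax : ℝ) (hτmin : 0 < τmin)
    (hτbd : ∀ z, τmin ≤ τ z ∧ τ z ≤ τmax)
    (α : M → ℝ → ℝ)
    (hα : ∀ z t, (∫ r in (0:ℝ)..(α z t), τ (g r z)) = t)
    (hα' : ∀ z t, α z (∫ r in (0:ℝ)..t, τ (g r z)) = t)
    (C₀ B : ℝ) (hC₀ : 0 < C₀) (hB : 0 < B)
    (x y : M)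
    (hcontr : ∀ t ≥ (0:ℝ), dist (g t x) (g t y) ≤ C₀ * Real.exp (-B * t) * dist x y) :
    ∃ c > (0:ℝ), ∃ C > (0:ℝ), ∀ t > (0:ℝ),
      |α x t - α y (t - ∫ r in Set.Ioi (0:ℝ), (τ (g r x) - τ (g r y)))|
        ≤ C * Real.exp (-c * t) :=
  stmt_5_general g hg τ L hτ τmin τmax hτmin hτbd α hα C₀ B hB x y hcontr
end

section
/- Let g_t be a flow on M with d(g_t x, g_t y) → 0 exponentially for y ∈ W^s(x) and τ positive Lipschitz. Define β^s(x,y) = ∫₀^∞(τ(g_r x) − τ(g_r y)) dr and the time-changed flow g^τ. If y ∈ W^s(x), then d(g^τ_t(x), g^τ_{t − β^s(x,y)}(y)) → 0 as t → +∞. Consequently, the point g^τ_{−β^s(x,y)}(y) satisfies d(g^τ_t x, g^τ_t(g^τ_{−β^s(x,y)} y)) → 0 as t → +∞. -/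
/-!
The clocks of `x` and `y` under the time change differ, after reading `α x t` units of the old
time, by `∫₀^{α x t} (τ(g_r x) − τ(g_r y)) dr`, which converges to `β^s(x,y)` because the
integrand decays exponentially. Over the old-time interval between `α x t` and `α y (t − β)` the
clock of `y` advances by exactly the error in this convergence, and it runs at speed `≥ τmin > 0`,
so this delay tends to `0`. The two orbit points are then close by the stable contraction at time
`α x t → ∞` together with the uniform continuity of the flow in time on the compact space `M`.
The second claim is the first one, because `g^τ` is again a flow.
-/

open MeasureTheory Filter Set Topology

theorem mul_abs_sub_le_abs_integral {f : ℝ → ℝ} {m a b : ℝ}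
    (hf : IntervalIntegrable f volume a b) (hm : ∀ r, m ≤ f r) :
    m * |b - a| ≤ |∫ r in a..b, f r| := by
  wlog hab : a ≤ b generalizing a b
  · rw [abs_sub_comm, intervalIntegral.integral_symm, abs_neg]
    exact this hf.symm (le_of_not_ge hab)
  calc m * |b - a| = ∫ _ in a..b, m := by
        rw [intervalIntegral.integral_const, smul_eq_mul, abs_of_nonneg (sub_nonneg.2 hab),
          mul_comm]
    _ ≤ ∫ r in a..b, f r :=
        intervalIntegral.integral_mono_on hab intervalIntegrable_const hf fun r _ => hm r
    _ ≤ _ := le_abs_self _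

theorem monotone_integral_of_nonneg {f : ℝ → ℝ} (hf : Continuous f) (h0 : ∀ r, 0 ≤ f r) :
    Monotone fun s => ∫ r in (0 : ℝ)..s, f r := by
  intro a b hab
  have hsplit := intervalIntegral.integral_interval_sub_left
    (hf.intervalIntegrable (μ := volume) 0 b) (hf.intervalIntegrable 0 a)
  have hnonneg := intervalIntegral.integral_nonneg (μ := volume) hab fun u _ => h0 u
  dsimp only
  linarith

theorem tendsto_atTop_of_rightInverse {X Y : Type*} [LinearOrder X] [Preorder Y] [NoMaxOrder Y]
    {F : X → Y} {α : Y → X} (hF : Monotone F) (hα : Function.RightInverse α F) :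
    Tendsto α atTop atTop :=
  tendsto_atTop.2 fun N => (eventually_gt_atTop (F N)).mono fun t ht =>
    le_of_not_gt fun hlt => not_le_of_gt ht (hα t ▸ hF hlt.le)

theorem LipschitzWith.integrableOn_Ioi_sub_of_dist_le_exp {M : Type*} [PseudoMetricSpace M]
    {τ : M → ℝ} {L : NNReal} (hτ : LipschitzWith L τ) {u v : ℝ → M} (hu : Continuous u)
    (hv : Continuous v) {C B : ℝ} (hB : 0 < B)
    (h : ∀ t ≥ (0 : ℝ), dist (u t) (v t) ≤ C * Real.exp (-B * t)) :
    IntegrableOn (fun r => τ (u r) - τ (v r)) (Ioi 0) := by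
  refine integrable_of_isBigO_exp_neg hB
    ((hτ.continuous.comp hu).sub (hτ.continuous.comp hv)).continuousOn
    (Asymptotics.IsBigO.of_bound (L * C) ((eventually_ge_atTop 0).mono fun t ht => ?_))
  rw [Real.norm_eq_abs (Real.exp _), abs_of_pos (Real.exp_pos _), ← dist_eq_norm, mul_assoc]
  exact (hτ.dist_le_mul _ _).trans (mul_le_mul_of_nonneg_left (h t ht) L.coe_nonneg)

section Flow

variable {M : Type*} [PseudoMetricSpace M] {g : ℝ → M → M}

theorem tendsto_dist_flow_self_of_tendsto_zero [CompactSpace M]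
    (hg : Continuous fun p : ℝ × M => g p.1 p.2) (hg0 : ∀ z, g 0 z = z) {ι : Type*} {l : Filter ι}
    {s : ι → ℝ} (hs : Tendsto s l (𝓝 0)) (w : ι → M) :
    Tendsto (fun i => dist (g (s i) (w i)) (w i)) l (𝓝 0) := by
  have hunif := Metric.tendstoUniformly_iff.1 (Continuous.tendstoUniformly g hg 0)
  rw [Metric.tendsto_nhds]
  intro ε hε
  filter_upwards [hs.eventually (hunif ε hε)] with i hi
  simpa [hg0, dist_comm] using hi (w i)

theorem tendsto_dist_flow_of_sub_tendsto_zero [CompactSpace M]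
    (hg : Continuous fun p : ℝ × M => g p.1 p.2) (hg0 : ∀ z, g 0 z = z)
    (hgadd : ∀ t s z, g (t + s) z = g t (g s z)) {x y : M}
    (hxy : Tendsto (fun t => dist (g t x) (g t y)) atTop (𝓝 0)) {ι : Type*} {l : Filter ι}
    {a b : ι → ℝ} (ha : Tendsto a l atTop) (hab : Tendsto (fun i => b i - a i) l (𝓝 0)) :
    Tendsto (fun i => dist (g (a i) x) (g (b i) y)) l (𝓝 0) := by
  have hdelay : Tendsto (fun i => dist (g (a i) y) (g (b i) y)) l (𝓝 0) := by
    simpa [dist_comm, ← hgadd] using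
      tendsto_dist_flow_self_of_tendsto_zero hg hg0 hab fun i => g (a i) y
  refine squeeze_zero (fun _ => dist_nonneg) (fun i => dist_triangle _ (g (a i) y) _) ?_
  simpa using (hxy.comp ha).add hdelay

end Flow

section TimeChange

variable {M : Type*} {g : ℝ → M → M} {τ : M → ℝ} {α : M → ℝ → ℝ}

theorem time_change_add (hgadd : ∀ t s z, g (t + s) z = g t (g s z))
    (hτg : ∀ z, Continuous fun r => τ (g r z))
    (hα : ∀ z t, (∫ r in (0 : ℝ)..(α z t), τ (g r z)) = t)
    (hα' : ∀ z t, α z (∫ r in (0 : ℝ)..t, τ (g r z)) = t) (z : M) (s t : ℝ) :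
    g (α (g (α z s) z) t) (g (α z s) z) = g (α z (t + s)) z := by
  set a := α z s
  have hclock : (∫ r in (0 : ℝ)..(α z (t + s) - a), τ (g r (g a z))) = t := by
    simp_rw [← hgadd]
    rw [intervalIntegral.integral_comp_add_right (fun r => τ (g r z)), zero_add, sub_add_cancel,
      ← intervalIntegral.integral_interval_sub_left ((hτg z).intervalIntegrable _ _)
        ((hτg z).intervalIntegrable _ _), hα, hα, add_sub_cancel_right]
  have hshift : α (g a z) t = α z (t + s) - a := by
    simpa only [hclock] using hα' (g a z) (α z (t + s) - a)
  rw [hshift, ← hgadd, sub_add_cancel]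

theorem tendsto_time_change_delay {m : ℝ} (hm : 0 < m) (hτm : ∀ z, m ≤ τ z)
    (hτg : ∀ z, Continuous fun r => τ (g r z))
    (hα : ∀ z t, (∫ r in (0 : ℝ)..(α z t), τ (g r z)) = t) {x y : M}
    (hint : IntegrableOn (fun r => τ (g r x) - τ (g r y)) (Ioi 0))
    (hαx : Tendsto (α x) atTop atTop) :
    Tendsto (fun t => α y (t - ∫ r in Ioi (0 : ℝ), (τ (g r x) - τ (g r y))) - α x t)
      atTop (𝓝 0) := by
  set β := ∫ r in Ioi (0 : ℝ), (τ (g r x) - τ (g r y))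
  set E := fun t => (∫ r in (0 : ℝ)..(α x t), (τ (g r x) - τ (g r y))) - β
  have hE : Tendsto E atTop (𝓝 0) := by
    have := ((intervalIntegral_tendsto_integral_Ioi 0 hint tendsto_id).comp hαx).sub_const β
    rwa [sub_self] at this
  have hdelay : ∀ t, m * |α y (t - β) - α x t| ≤ |E t| := by
    intro t
    have hint_y := (hτg y).intervalIntegrable (μ := volume)
    have hsplit := intervalIntegral.integral_interval_sub_left
      (hint_y 0 (α y (t - β))) (hint_y 0 (α x t))
    have hdiff := intervalIntegral.integral_sub
      ((hτg x).intervalIntegrable 0 (α x t)) (hint_y 0 (α x t))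
    -- over the delay interval the clock of `y` advances by exactly `E t`
    have hE_eq : (∫ r in (α x t)..(α y (t - β)), τ (g r y)) = E t := by
      simp only [E]
      linarith [hα x t, hα y (t - β)]
    rw [← hE_eq]
    exact mul_abs_sub_le_abs_integral (hint_y _ _) fun r => hτm _
  refine squeeze_zero_norm (fun t => ?_) ((hE.abs.div_const m).trans_eq (by simp))
  rw [Real.norm_eq_abs, le_div_iff₀ hm, mul_comm]
  exact hdelay t

end TimeChange

theorem stmt_6_general {M : Type*} [MetricSpace M] [CompactSpace M]
    (g : ℝ → M → M)
    (hg : Continuous fun p : ℝ × M => g p.1 p.2)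
    (hg0 : ∀ z, g 0 z = z)
    (hgadd : ∀ t s z, g (t + s) z = g t (g s z))
    (τ : M → ℝ) (L : NNReal) (hτ : LipschitzWith L τ)
    (τmin τmax : ℝ) (hτmin : 0 < τmin)
    (hτbd : ∀ z, τmin ≤ τ z ∧ τ z ≤ τmax)
    (α : M → ℝ → ℝ)
    (hα : ∀ z t, (∫ r in (0:ℝ)..(α z t), τ (g r z)) = t)
    (hα' : ∀ z t, α z (∫ r in (0:ℝ)..t, τ (g r z)) = t)
    (C₀ B : ℝ) (hB : 0 < B)
    (x y : M)
    (hcontr : ∀ t ≥ (0:ℝ), dist (g t x) (g t y) ≤ C₀ * Real.exp (-B * t)) :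
    Tendsto
      (fun t => dist (g (α x t) x)
        (g (α y (t - ∫ r in Set.Ioi (0:ℝ), (τ (g r x) - τ (g r y)))) y))
      atTop (nhds 0) ∧
    Tendsto
      (fun t => dist (g (α x t) x)
        (g (α (g (α y (-(∫ r in Set.Ioi (0:ℝ), (τ (g r x) - τ (g r y))))) y) t)
           (g (α y (-(∫ r in Set.Ioi (0:ℝ), (τ (g r x) - τ (g r y))))) y)))
      atTop (nhds 0) := by
  have horbit : ∀ z, Continuous fun r => g r z := fun z =>
    hg.comp (continuous_id.prodMk continuous_const)
  have hτg : ∀ z, Continuous fun r => τ (g r z) := fun z => hτ.continuous.comp (horbit z)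
  have hαx : Tendsto (α x) atTop atTop := tendsto_atTop_of_rightInverse
    (monotone_integral_of_nonneg (hτg x) fun r => hτmin.le.trans (hτbd _).1) (hα x)
  have hstable : Tendsto (fun t => dist (g t x) (g t y)) atTop (𝓝 0) := by
    have hexp := (Real.tendsto_exp_atBot.comp
      (tendsto_id.const_mul_atTop_of_neg (neg_neg_of_pos hB))).const_mul C₀
    exact squeeze_zero' (Eventually.of_forall fun _ => dist_nonneg)
      ((eventually_ge_atTop 0).mono hcontr) (by simpa using hexp)
  have hdelay := tendsto_time_change_delay hτmin (fun z => (hτbd z).1) hτg hα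
    (hτ.integrableOn_Ioi_sub_of_dist_le_exp (horbit x) (horbit y) hB hcontr) hαx
  have hfirst := tendsto_dist_flow_of_sub_tendsto_zero hg hg0 hgadd hstable hαx hdelay
  refine ⟨hfirst, ?_⟩
  simp_rw [time_change_add hgadd hτg hα hα', ← sub_eq_add_neg]
  exact hfirst

/-- If `y ∈ W^s(x)` (exponential contraction of forward orbits),
then along the time-changed flow `g^τ_t(z) = g_{α(z,t)}(z)` we have
`d(g^τ_t x, g^τ_{t − β^s(x,y)} y) → 0` as `t → +∞`, and consequently the point
`g^τ_{−β^s(x,y)}(y)` satisfies `d(g^τ_t x, g^τ_t (g^τ_{−β^s(x,y)} y)) → 0`.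
Here `β^s(x,y) = ∫₀^∞ (τ(g_r x) − τ(g_r y)) dr`. -/
theorem stmt_6 {M : Type*} [MetricSpace M] [CompactSpace M]
    (g : ℝ → M → M)
    (hg : Continuous fun p : ℝ × M => g p.1 p.2)
    (hg0 : ∀ z, g 0 z = z)
    (hgadd : ∀ t s z, g (t + s) z = g t (g s z))
    (τ : M → ℝ) (L : NNReal) (hτ : LipschitzWith L τ)
    (τmin τmax : ℝ) (hτmin : 0 < τmin)
    (hτbd : ∀ z, τmin ≤ τ z ∧ τ z ≤ τmax)
    (α : M → ℝ → ℝ)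
    (hα : ∀ z t, (∫ r in (0:ℝ)..(α z t), τ (g r z)) = t)
    (hα' : ∀ z t, α z (∫ r in (0:ℝ)..t, τ (g r z)) = t)
    (C₀ B : ℝ) (hC₀ : 0 < C₀) (hB : 0 < B)
    (x y : M)
    (hcontr : ∀ t ≥ (0:ℝ), dist (g t x) (g t y) ≤ C₀ * Real.exp (-B * t)) :
    Tendsto
      (fun t => dist (g (α x t) x)
        (g (α y (t - ∫ r in Set.Ioi (0:ℝ), (τ (g r x) - τ (g r y)))) y))
      atTop (nhds 0) ∧
    Tendsto
      (fun t => dist (g (α x t) x)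
        (g (α (g (α y (-(∫ r in Set.Ioi (0:ℝ), (τ (g r x) - τ (g r y))))) y) t)
           (g (α y (-(∫ r in Set.Ioi (0:ℝ), (τ (g r x) - τ (g r y))))) y)))
      atTop (nhds 0) :=
  stmt_6_general g hg hg0 hgadd τ L hτ τmin τmax hτmin hτbd α hα hα' C₀ B hB x y hcontr
end
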